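/- Let G be a graph on vertex set [n] with an edge e = {p, q} such that both p and q have degree 1 in G. Then the graphic matroid-of-arrangement M whose ground set is E(G) and whose flats are the edge sets E(G|_V) of vertex-induced subgraphs fails MCB(a) for every a ≥ 1. -/
import Mathlib


open Set

/-- The edges of `G` induced by a vertex subset `S`: edges with both endpoints in `S`. -/
def inducedEdges {n : ℕ} (G : SimpleGraph (Fin n)) (S : Set (Fin n)) : Set (Sym2 (Fin n)) :=
  {e | e ∈ G.edgeSet ∧ ∀ v ∈ e, v ∈ S}

/-- If `G` has an edge `{p, q}` with both endpoints of degree `1`, then the graphic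
arrangement matroid (flats = induced edge sets) fails `MCB(a)` for every `a ≥ 1`. -/
theorem graphic_fails_mcb_of_deg_one_edge {n : ℕ} (G : SimpleGraph (Fin n))
    [DecidableRel G.Adj] (p q : Fin n) (hpq : G.Adj p q)
    (hp : G.degree p = 1) (hq : G.degree q = 1) :
    ∀ a : ℕ, 1 ≤ a → ∃ (V : Fin a → Set (Fin n)) (f : Sym2 (Fin n)), f ∈ G.edgeSet ∧
      G.edgeSet \ {f} ⊆ ⋃ i, inducedEdges G (V i) ∧
      (⋃ i, inducedEdges G (V i)) ≠ G.edgeSet := by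
  intro a ha
  have huniq : ∀ v, G.Adj p v → v = q := by
    intro v hv
    have h1 : G.neighborFinset p = {q} := by
      apply Finset.eq_singleton_iff_unique_mem.mpr
      constructor
      · simpa using hpq
      · intro x hx
        have hx' : G.Adj p x := by simpa using hx
        by_contra hxq
        have : ({x, q} : Finset (Fin n)) ⊆ G.neighborFinset p := by
          intro y hy
          simp only [Finset.mem_insert, Finset.mem_singleton] at hy
          rcases hy with rfl | rfl <;> simpa [hx', hpq]
        have hcard : ({x, q} : Finset (Fin n)).card = 2 := by
          rw [Finset.card_insert_of_notMem (by simpa using hxq)]; simp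
        have := Finset.card_le_card this
        rw [hcard] at this
        unfold SimpleGraph.degree at hp
        omega
    have : v ∈ G.neighborFinset p := by simpa using hv
    rw [h1] at this
    simpa using this
  refine ⟨fun _ => {p}ᶜ, s(p, q), hpq, ?_, ?_⟩
  · rintro e ⟨he, hef⟩
    have hi : Nonempty (Fin a) := ⟨⟨0, ha⟩⟩
    refine mem_iUnion.mpr ⟨Classical.arbitrary _, he, ?_⟩
    intro v hv
    simp only [mem_compl_iff, mem_singleton_iff]
    rintro rfl
    induction e with
    | h x y =>
      rw [Sym2.mem_iff] at hv
      rw [SimpleGraph.mem_edgeSet] at he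
      rcases hv with rfl | rfl
      · exact hef (by rw [mem_singleton_iff, huniq y he])
      · exact hef (by rw [mem_singleton_iff, huniq x he.symm, Sym2.eq_swap])
  · intro hcontra
    have : s(p, q) ∈ ⋃ i, inducedEdges G ((fun _ : Fin a => ({p}ᶜ : Set (Fin n))) i) := by
      rw [hcontra]; exact hpq
    rcases mem_iUnion.mp this with ⟨i, _, hmem⟩
    exact hmem p (by simp) rfl
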